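/- arXiv:1609.08229 — 3 statements merged into one kernel-verified Lean document; each statement's English description precedes it below -/
import Mathlib

section
/- Lower bound in Theorem 5.3(i): with K ≥ 0 self-adjoint, 0 ≤ V bounded, P the orthogonal projection onto Ker K, and T_V := P V P restricted to Ker K compact, one has n₊(λ; T_V) ≤ N₋(λ) for all λ > 0, where N₋(λ) is the number of eigenvalues of K − V below −λ. -/
open ContinuousLinearMap
open scoped InnerProductSpace

/-- lower bound in Theorem 5.3(i): let `K ≥ 0` be self-adjoint
(encoded by a symmetric nonnegative `K` on a domain `DomK`), let `P` be the
orthogonal projection onto `KerK = Ker K`, and `V ≥ 0` bounded self-adjoint such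
that `T_V = PVP` (restricted to `Ker K`) is compact. Then for every `λ > 0`,
`n₊(λ; T_V) ≤ N₋(λ)`, where both counting functions are expressed via the
variational (Glazman) principle: `n₊(λ;T_V)` over subspaces of `Ker K`, and
`N₋(λ)` (number of eigenvalues of `K − V` below `−λ`) over subspaces of `Dom K`. -/
theorem stmt15 {X : Type*} [NormedAddCommGroup X] [InnerProductSpace ℂ X] [CompleteSpace X]
    (DomK : Submodule ℂ X) (K : DomK →ₗ[ℂ] X)
    (hsym : ∀ x y : DomK, ⟪K x, (y : X)⟫_ℂ = ⟪(x : X), K y⟫_ℂ)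
    (hpos : ∀ x : DomK, 0 ≤ (⟪K x, (x : X)⟫_ℂ).re)
    (KerK : Submodule ℂ X) (hKsub : (KerK : Set X) ⊆ (DomK : Set X))
    (hker : ∀ x : DomK, K x = 0 ↔ (x : X) ∈ KerK)
    (P : X →L[ℂ] X) (hPsa : IsSelfAdjoint P)
    (hPrange : ∀ x : X, P x ∈ KerK) (hPfix : ∀ x ∈ KerK, P x = x)
    (V : X →L[ℂ] X) (hVsa : IsSelfAdjoint V) (hVpos : ∀ x : X, 0 ≤ (⟪V x, x⟫_ℂ).re)
    (hTVcpt : IsCompactOperator (P ∘L V ∘L P))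
    (t : ℝ) (ht : 0 < t) :
    (⨆ (W : Submodule ℂ X)
      (_ : W ≤ KerK ∧ ∀ x ∈ W, x ≠ 0 →
        t * ‖x‖ ^ 2 < (⟪(P ∘L V ∘L P) x, x⟫_ℂ).re),
      (Module.finrank ℂ W : ℕ∞)) ≤
    (⨆ (W' : Submodule ℂ X)
      (_ : (W' : Set X) ⊆ (DomK : Set X) ∧
        ∀ x : DomK, (x : X) ∈ W' → (x : X) ≠ 0 →
          (⟪K x - V (x : X), (x : X)⟫_ℂ).re < -t * ‖(x : X)‖ ^ 2),
      (Module.finrank ℂ W' : ℕ∞)) := by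
  refine iSup_le fun W => iSup_le fun hW => ?_
  refine le_iSup_of_le W (le_iSup_of_le ⟨?_, ?_⟩ le_rfl)
  · exact fun x hx => hKsub (hW.1 hx)
  · intro x hxW hxne
    have hxker : (x : X) ∈ KerK := hW.1 hxW
    have hK0 : K x = 0 := (hker x).mpr hxker
    have hPx : P (x : X) = x := hPfix _ hxker
    have hPVP : (⟪(P ∘L V ∘L P) (x : X), (x : X)⟫_ℂ) = ⟪V (x : X), (x : X)⟫_ℂ := by
      simp only [ContinuousLinearMap.comp_apply, hPx]
      exact (hPsa.isSymmetric (V (x : X)) (x : X)).trans (by simp only [ContinuousLinearMap.coe_coe, hPx])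
    have h := hW.2 (x : X) hxW hxne
    rw [hPVP] at h
    rw [hK0]
    simp only [inner_sub_left, Complex.sub_re, inner_zero_left, Complex.zero_re]
    linarith
end

section
/- Counting-function asymptotics for the explicit model: if n(λ) := M_{ν(λ)-1} where ν(λ) := #{k ∈ ℤ_{≥0} : b c^{2k+d} > λ} and M_k := C(d+k-1,d-1)+C(d+k-2,d-1), then lim_{λ↓0} |ln λ|^{-(d-1)}·n(λ) = 2^{-d+2} / ((d-1)!·|ln c|^{d-1}). -/
open Filter Topology Asymptotics Real

/-!
For `t > 0`, `t < b c^(2k+d)` means `k < (log (b c^d) - log t) / |log c²|`, so `ν t` is the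
ceiling of an affine function of `|log t|` and `ν t ~ |log t| / (2 |log c|)` as `t → 0⁺`. Both
binomial coefficients in `M (m - 1)` are `~ m^(d-1) / (d-1)!`, so `n t ~ 2 (ν t)^(d-1) / (d-1)!`,
and composing the two equivalences gives `n t ~ 2^(2-d) |log t|^(d-1) / ((d-1)! |log c|^(d-1))`.
-/

lemma isEquivalent_natCast_sub_add (j r : ℕ) :
    (fun m : ℕ => ((m - j + r : ℕ) : ℝ)) ~[atTop] fun m => (m : ℝ) := by
  have hshift : (fun m : ℕ => ((m - j + r : ℕ) : ℝ)) =ᶠ[atTop]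
      fun m => (m : ℝ) + ((r : ℝ) - j) := by
    filter_upwards [eventually_ge_atTop j] with m hm
    push_cast [hm]
    ring
  refine (IsEquivalent.refl.add_const_of_norm_tendsto_atTop ?_).congr_left hshift.symm
  exact tendsto_norm_atTop_atTop.comp tendsto_natCast_atTop_atTop

lemma isEquivalent_choose_sub_add (j r : ℕ) :
    (fun m : ℕ => ((m - j + r).choose r : ℝ)) ~[atTop] fun m => (m : ℝ) ^ r / r.factorial := by
  have hchoose := (isEquivalent_choose r).comp_tendsto
    ((tendsto_add_atTop_nat r).comp (tendsto_sub_atTop_nat j))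
  exact hchoose.trans (((isEquivalent_natCast_sub_add j r).pow r).div IsEquivalent.refl)

lemma isEquivalent_choose_add_choose {d : ℕ} (hd : 2 ≤ d) (M : ℕ → ℕ)
    (hM : ∀ k, M k = Nat.choose (d + k - 1) (d - 1) + Nat.choose (d + k - 2) (d - 1)) :
    (fun m : ℕ => (M (m - 1) : ℝ)) ~[atTop] fun m => 2 / (d - 1).factorial * (m : ℝ) ^ (d - 1) := by
  have hM' : (fun m : ℕ => (M (m - 1) : ℝ)) =ᶠ[atTop] fun m =>
      ((m - 1 + (d - 1)).choose (d - 1) : ℝ) + ((m - 2 + (d - 1)).choose (d - 1) : ℝ) := by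
    filter_upwards [eventually_ge_atTop 2] with m hm
    rw [hM, show d + (m - 1) - 1 = m - 1 + (d - 1) by omega,
      show d + (m - 1) - 2 = m - 2 + (d - 1) by omega]
    push_cast
    rfl
  have hsum := IsEquivalent.add_add_of_nonneg (fun m => by positivity) (fun m => by positivity)
    (isEquivalent_choose_sub_add 1 (d - 1)) (isEquivalent_choose_sub_add 2 (d - 1))
  refine (hsum.congr_left hM'.symm).congr_right (Eventually.of_forall fun m => ?_)
  simp only [Pi.add_apply]
  ring

lemma isEquivalent_natCeil_add_div (a : ℝ) {s : ℝ} (hs : 0 < s) :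
    (fun u : ℝ => (⌈(u + a) / s⌉₊ : ℝ)) ~[atTop] fun u => u / s := by
  have hceil : (fun x : ℝ => (⌈x⌉₊ : ℝ)) ~[atTop] id :=
    isEquivalent_of_tendsto_one tendsto_nat_ceil_div_atTop
  have hshift : (fun u : ℝ => (u + a) / s) ~[atTop] fun u => u / s := by
    simp only [add_div]
    exact IsEquivalent.refl.add_const_of_norm_tendsto_atTop
      (tendsto_norm_atTop_atTop.comp (tendsto_id.atTop_div_const hs))
  exact (hceil.comp_tendsto
    ((tendsto_atTop_add_const_right _ a tendsto_id).atTop_div_const hs)).trans hshift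

section GeometricCount

variable {B q : ℝ} (hB : 0 < B) (hq₀ : 0 < q) (hq₁ : q < 1)
include hB hq₀ hq₁

lemma setOf_lt_mul_pow_eq_Iio {t : ℝ} (ht : 0 < t) :
    {k : ℕ | t < B * q ^ k} = Set.Iio ⌈(-log t + log B) / -log q⌉₊ := by
  have hlogq : 0 < -log q := neg_pos.2 (log_neg hq₀ hq₁)
  ext k
  rw [Set.mem_ofPred_eq, Set.mem_Iio, Nat.lt_ceil, lt_div_iff₀ hlogq,
    ← log_lt_log_iff ht (by positivity), log_mul hB.ne' (by positivity), log_pow]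
  constructor <;> intro h <;> linarith

lemma natCard_setOf_lt_mul_pow {t : ℝ} (ht : 0 < t) :
    Nat.card {k : ℕ | t < B * q ^ k} = ⌈(-log t + log B) / -log q⌉₊ := by
  rw [setOf_lt_mul_pow_eq_Iio hB hq₀ hq₁ ht]
  simp

lemma isEquivalent_natCard_setOf_lt_mul_pow :
    (fun t => (Nat.card {k : ℕ | t < B * q ^ k} : ℝ)) ~[𝓝[>] 0] fun t => -log t / -log q := by
  have hlog : Tendsto (fun t => -log t) (𝓝[>] (0 : ℝ)) atTop :=
    tendsto_neg_atBot_atTop.comp tendsto_log_nhdsGT_zero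
  refine ((isEquivalent_natCeil_add_div (log B) (neg_pos.2 (log_neg hq₀ hq₁))).comp_tendsto
    hlog).congr_left ?_
  filter_upwards [self_mem_nhdsWithin] with t ht
  simp [natCard_setOf_lt_mul_pow hB hq₀ hq₁ ht]

end GeometricCount

lemma two_div_div_two_mul_pow {d : ℕ} (hd : 1 ≤ d) (a x : ℝ) :
    2 / a / (2 * x) ^ (d - 1) = (2 : ℝ) ^ ((2 : ℤ) - d) / (a * x ^ (d - 1)) := by
  rw [mul_pow, show (2 : ℤ) - d = 1 - ((d - 1 : ℕ) : ℤ) by omega, zpow_sub₀ two_ne_zero, zpow_one,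
    zpow_natCast]
  ring

/-- for `n(λ) = M_{ν(λ)-1}` with `ν(λ) = #{k : b c^{2k+d} > λ}`,
`lim_{λ↓0} |ln λ|^{-(d-1)} n(λ) = 2^{2-d}/((d-1)! |ln c|^{d-1})`. -/
theorem stmt16 (d : ℕ) (hd : 2 ≤ d) (b c : ℝ) (hb : 0 < b) (hc : c ∈ Set.Ioo (0 : ℝ) 1)
    (ν : ℝ → ℕ) (hν : ∀ t : ℝ, ν t = Nat.card {k : ℕ | t < b * c ^ (2 * k + d)})
    (M : ℕ → ℕ)
    (hM : ∀ k, M k = Nat.choose (d + k - 1) (d - 1) + Nat.choose (d + k - 2) (d - 1))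
    (n : ℝ → ℕ) (hn : ∀ t : ℝ, n t = if ν t = 0 then 0 else M (ν t - 1)) :
    Filter.Tendsto (fun t : ℝ => (n t : ℝ) / |Real.log t| ^ (d - 1))
      (nhdsWithin 0 (Set.Ioi 0))
      (nhds ((2 : ℝ) ^ ((2 : ℤ) - (d : ℤ)) /
        (((d - 1).factorial : ℝ) * |Real.log c| ^ (d - 1)))) := by
  obtain ⟨hc₀, hc₁⟩ := hc
  have hν_equiv : (fun t => (ν t : ℝ)) ~[𝓝[>] 0] fun t => -log t / (2 * |log c|) := by
    have hgeom : ∀ k : ℕ, b * c ^ (2 * k + d) = b * c ^ d * (c ^ 2) ^ k := fun k => by ring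
    have hlog_sq : -log (c ^ 2) = 2 * |log c| := by
      rw [log_pow, abs_of_neg (log_neg hc₀ hc₁)]
      push_cast
      ring
    simp only [hν, hgeom, ← hlog_sq]
    exact isEquivalent_natCard_setOf_lt_mul_pow (by positivity) (by positivity) (by nlinarith)
  have hν_top : Tendsto ν (𝓝[>] 0) atTop :=
    tendsto_natCast_atTop_iff.1 (hν_equiv.symm.tendsto_atTop
      ((tendsto_neg_atBot_atTop.comp tendsto_log_nhdsGT_zero).atTop_div_const
        (mul_pos two_pos (abs_pos.2 (log_neg hc₀ hc₁).ne))))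
  have hn_equiv : (fun t => (n t : ℝ)) ~[𝓝[>] 0]
      fun t => 2 / (d - 1).factorial * (-log t / (2 * |log c|)) ^ (d - 1) := by
    refine ((isEquivalent_choose_add_choose hd M hM).comp_tendsto hν_top).congr_left ?_
      |>.trans (IsEquivalent.refl.mul (hν_equiv.pow (d - 1)))
    filter_upwards [hν_top.eventually_ge_atTop 1] with t ht
    simp [hn, Nat.one_le_iff_ne_zero.1 ht]
  rw [← two_div_div_two_mul_pow (by omega)]
  refine (hn_equiv.div IsEquivalent.refl).congr_right ?_ |>.tendsto_const
  filter_upwards [Ioo_mem_nhdsGT one_pos] with t ht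
  have hlog_pos : 0 < -log t := neg_pos.2 (log_neg ht.1 ht.2)
  simp only [Pi.div_apply, Function.const_apply, abs_of_neg (log_neg ht.1 ht.2), div_pow]
  field_simp
end

section
/- Schatten trace-norm bound: if P : L²(Ω) → L²(Ω) is an orthogonal projection with measurable integral kernel R(x,y) satisfying R(x,y) = conj(R(y,x)) and ρ(x) := R(x,x) ≥ 0 locally integrable, and V ∈ L¹(Ω; ρ dx), then PVP is trace class with ‖PVP‖_{S₁} ≤ ∫_Ω |V(x)| ρ(x) dx. -/
/-!
For almost every `x`, the row `y ↦ R x y` is square integrable with `‖R x ·‖² = ρ(x)`, and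
`(P u)(x) = ⟪conj R(x, ·), u⟫`. Bessel's inequality for the two orthonormal systems then gives
`∑ⱼ |P eⱼ(x)| |P fⱼ(x)| ≤ ρ(x)`, and integrating against `|V|` bounds
`∑ⱼ |⟪V P eⱼ, P fⱼ⟫| = ∑ⱼ |⟪P V P eⱼ, fⱼ⟫|` by `∫ |V| ρ`.

Where a row is not square integrable the Bochner integral in the reproducing identity is `0`, so
that identity only yields `Re R(x, x) = 0`. Testing `P` against normalized indicators of small
balls shows that such a row vanishes on the support of the measure, so this happens only on a
null set.
-/

open MeasureTheory ContinuousLinearMap Metric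
open scoped InnerProductSpace ENNReal

theorem Orthonormal.sum_norm_inner_mul_norm_inner_le {𝕜 E ι : Type*} [RCLike 𝕜]
    [NormedAddCommGroup E] [InnerProductSpace 𝕜 E] {e f : ι → E} (he : Orthonormal 𝕜 e)
    (hf : Orthonormal 𝕜 f) (s : Finset ι) (k : E) :
    ∑ j ∈ s, ‖⟪e j, k⟫_𝕜‖ * ‖⟪f j, k⟫_𝕜‖ ≤ ‖k‖ ^ 2 := by
  have hamgm : ∀ j ∈ s, ‖⟪e j, k⟫_𝕜‖ * ‖⟪f j, k⟫_𝕜‖ ≤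
      (‖⟪e j, k⟫_𝕜‖ ^ 2 + ‖⟪f j, k⟫_𝕜‖ ^ 2) / 2 := fun j _ => by
    nlinarith [sq_nonneg (‖⟪e j, k⟫_𝕜‖ - ‖⟪f j, k⟫_𝕜‖)]
  calc ∑ j ∈ s, ‖⟪e j, k⟫_𝕜‖ * ‖⟪f j, k⟫_𝕜‖
      ≤ (∑ j ∈ s, ‖⟪e j, k⟫_𝕜‖ ^ 2 + ∑ j ∈ s, ‖⟪f j, k⟫_𝕜‖ ^ 2) / 2 := by
        rw [← Finset.sum_add_distrib, Finset.sum_div]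
        exact Finset.sum_le_sum hamgm
    _ ≤ ‖k‖ ^ 2 := by
        linarith [he.sum_inner_products_le k (s := s), hf.sum_inner_products_le k (s := s)]

theorem IsStarProjection.inner_apply_right {𝕜 E : Type*} [RCLike 𝕜] [NormedAddCommGroup E]
    [InnerProductSpace 𝕜 E] [CompleteSpace E] {P : E →L[𝕜] E} (hP : IsStarProjection P)
    (u w : E) : ⟪u, P w⟫_𝕜 = ⟪P u, P w⟫_𝕜 :=
  calc ⟪u, P w⟫_𝕜 = ⟪u, P (P w)⟫_𝕜 :=
        congrArg (⟪u, ·⟫_𝕜) (DFunLike.congr_fun hP.isIdempotentElem.eq w).symm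
    _ = ⟪P u, P w⟫_𝕜 := (hP.isSelfAdjoint.isSymmetric u (P w)).symm

theorem exists_pos_forall_mem_ball_dist_le {X Y Z : Type*} [PseudoMetricSpace X]
    [PseudoMetricSpace Y] [PseudoMetricSpace Z] {F : X → Y → Z}
    (hF : Continuous (Function.uncurry F)) (x₀ : X) (y₀ : Y) {η : ℝ} (hη : 0 < η) :
    ∃ r > 0, ∀ x ∈ ball x₀ r, ∀ y ∈ ball y₀ r, dist (F x y) (F x₀ y₀) ≤ η := by
  obtain ⟨r, hr, hF⟩ := Metric.continuousAt_iff.1 (hF.continuousAt (x := (x₀, y₀))) η hη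
  exact ⟨r, hr, fun x hx y hy =>
    (hF (x := (x, y)) (by rw [Prod.dist_eq]; exact max_lt hx hy)).le⟩

section Measure

variable {α : Type*} [MeasurableSpace α] {μ : Measure α}

theorem exists_Lp_inner_eq_integral_mul {g : α → ℂ} (hgm : AEStronglyMeasurable g μ)
    (hg : Integrable (fun y => ‖g y‖ ^ 2) μ) :
    ∃ k : Lp ℂ 2 μ, ‖k‖ ^ 2 = ∫ y, ‖g y‖ ^ 2 ∂μ ∧
      ∀ u : Lp ℂ 2 μ, ⟪k, u⟫_ℂ = ∫ y, g y * u y ∂μ := by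
  have hmem : MemLp (fun y => (starRingEnd ℂ) (g y)) 2 μ :=
    (memLp_two_iff_integrable_sq_norm hgm.star).2 (by simpa using hg)
  refine ⟨hmem.toLp _, ?_, fun u => ?_⟩
  · rw [← inner_self_eq_norm_sq (𝕜 := ℂ), L2.inner_def,
      ← integral_re (L2.integrable_inner _ _)]
    refine integral_congr_ae (hmem.coeFn_toLp.mono fun y hy => ?_)
    simp only [RCLike.inner_apply, hy, starRingEnd_self_apply, Complex.conj_mul']
    norm_cast
  · rw [L2.inner_def]
    refine integral_congr_ae (hmem.coeFn_toLp.mono fun y hy => ?_)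
    simp [RCLike.inner_apply, hy, mul_comm]

def HasIntegralKernel (P : Lp ℂ 2 μ →L[ℂ] Lp ℂ 2 μ) (R : α → α → ℂ) : Prop :=
  ∀ u : Lp ℂ 2 μ, (P u : α → ℂ) =ᵐ[μ] fun x => ∫ y, R x y * u y ∂μ

noncomputable def averagingLp {s : Set α} (hs : MeasurableSet s) (hμs : μ s ≠ ∞) : Lp ℂ 2 μ :=
  indicatorConstLp 2 hs hμs ((μ.real s)⁻¹ : ℂ)

theorem inner_averagingLp {s : Set α} (hs : MeasurableSet s) (hμs : μ s ≠ ∞)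
    (u : Lp ℂ 2 μ) : ⟪averagingLp hs hμs, u⟫_ℂ = ⨍ x in s, u x ∂μ := by
  rw [averagingLp, L2.inner_indicatorConstLp_eq_inner_setIntegral, setAverage_eq]
  simp [RCLike.inner_apply, Complex.real_smul, mul_comm]

theorem integral_mul_averagingLp {s : Set α} (hs : MeasurableSet s) (hμs : μ s ≠ ∞)
    (g : α → ℂ) : ∫ y, g y * averagingLp hs hμs y ∂μ = ⨍ y in s, g y ∂μ := by
  rw [setAverage_eq, Complex.real_smul, mul_comm _ (∫ x in s, g x ∂μ), ← integral_mul_const,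
    ← integral_indicator hs]
  refine integral_congr_ae ((indicatorConstLp_coeFn (p := 2) (hs := hs) (hμs := hμs)
    (c := ((μ.real s)⁻¹ : ℂ))).mono fun y hy => ?_)
  rw [averagingLp]
  by_cases hys : y ∈ s <;> simp [hy, hys]

section Kernel

variable {P : Lp ℂ 2 μ →L[ℂ] Lp ℂ 2 μ} {R : α → α → ℂ} {s t : Set α}

theorem HasIntegralKernel.apply_averagingLp_ae (hPR : HasIntegralKernel P R)
    (ht : MeasurableSet t) (hμt : μ t ≠ ∞) :
    (P (averagingLp ht hμt) : α → ℂ) =ᵐ[μ] fun x => ⨍ y in t, R x y ∂μ :=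
  (hPR _).mono fun x hx => hx.trans (integral_mul_averagingLp ht hμt (R x))

theorem HasIntegralKernel.norm_inner_averagingLp_sub_le (hPR : HasIntegralKernel P R)
    (hs : MeasurableSet s) (hμs : μ s ≠ ∞) (ht : MeasurableSet t) (hμt : μ t ≠ ∞)
    (hμs₀ : μ s ≠ 0) (hμt₀ : μ t ≠ 0) (hRm : ∀ x, AEStronglyMeasurable (R x) μ) {c : ℂ}
    {η : ℝ} (hR : ∀ x ∈ s, ∀ y ∈ t, ‖R x y - c‖ ≤ η) :
    ‖⟪averagingLp hs hμs, P (averagingLp ht hμt)⟫_ℂ - c‖ ≤ η := by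
  have hinner : ∀ x ∈ s, ⨍ y in t, R x y ∂μ ∈ closedBall c η := fun x hx =>
    (convex_closedBall c η).set_average_mem isClosed_closedBall hμt₀ hμt
      ((ae_restrict_iff' ht).2 (ae_of_all _ fun y hy => mem_closedBall_iff_norm.2 (hR x hx y hy)))
      (Measure.integrableOn_of_bounded hμt (hRm x) (M := ‖c‖ + η)
        ((ae_restrict_iff' ht).2 (ae_of_all _ fun y hy => by
          linarith [norm_sub_norm_le (R x y) c, hR x hx y hy])))
  have hint : IntegrableOn (fun x => ⨍ y in t, R x y ∂μ) s μ :=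
    (integrableOn_Lp_of_measure_ne_top (P (averagingLp ht hμt)) one_le_two hμs).congr_fun_ae
      (ae_restrict_of_ae (hPR.apply_averagingLp_ae ht hμt))
  rw [← mem_closedBall_iff_norm, inner_averagingLp,
    average_congr (ae_restrict_of_ae (hPR.apply_averagingLp_ae ht hμt))]
  exact (convex_closedBall c η).set_average_mem isClosed_closedBall hμs₀ hμs
    ((ae_restrict_iff' hs).2 (ae_of_all _ hinner)) hint

end Kernel

section Multiplication

variable {Mv : Lp ℂ 2 μ →L[ℂ] Lp ℂ 2 μ} {V : α → ℂ}

theorem norm_inner_apply_ae_of_mul_operator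
    (hMv : ∀ u : Lp ℂ 2 μ, (Mv u : α → ℂ) =ᵐ[μ] fun x => V x * u x) (u w : Lp ℂ 2 μ) :
    ∀ᵐ x ∂μ, ‖⟪Mv u x, w x⟫_ℂ‖ = ‖V x‖ * (‖u x‖ * ‖w x‖) :=
  (hMv u).mono fun x hx => by
    simp only [RCLike.inner_apply, hx, norm_mul, RCLike.norm_conj]
    ring

theorem integrable_norm_mul_norm_mul_norm_of_mul_operator
    (hMv : ∀ u : Lp ℂ 2 μ, (Mv u : α → ℂ) =ᵐ[μ] fun x => V x * u x) (u w : Lp ℂ 2 μ) :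
    Integrable (fun x => ‖V x‖ * (‖u x‖ * ‖w x‖)) μ :=
  (L2.integrable_inner (𝕜 := ℂ) (Mv u) w).norm.congr
    (norm_inner_apply_ae_of_mul_operator hMv u w)

theorem norm_inner_le_integral_of_mul_operator
    (hMv : ∀ u : Lp ℂ 2 μ, (Mv u : α → ℂ) =ᵐ[μ] fun x => V x * u x) (u w : Lp ℂ 2 μ) :
    ‖⟪Mv u, w⟫_ℂ‖ ≤ ∫ x, ‖V x‖ * (‖u x‖ * ‖w x‖) ∂μ := by
  rw [L2.inner_def]
  exact (norm_integral_le_integral_norm _).trans_eq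
    (integral_congr_ae (norm_inner_apply_ae_of_mul_operator hMv u w))

end Multiplication

end Measure

section Metric

variable {X : Type*} [PseudoMetricSpace X] [ProperSpace X] [MeasurableSpace X]
  [OpensMeasurableSpace X] {μ : Measure X} [IsFiniteMeasureOnCompacts μ]
  {P : Lp ℂ 2 μ →L[ℂ] Lp ℂ 2 μ} {R : X → X → ℂ}

variable (μ) in
noncomputable def ballAveragingLp (x : X) (r : ℝ) : Lp ℂ 2 μ :=
  averagingLp (measurableSet_ball (x := x) (ε := r)) measure_ball_lt_top.ne

theorem HasIntegralKernel.norm_inner_ballAveragingLp_sub_le (hPR : HasIntegralKernel P R)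
    (hR : Continuous (Function.uncurry R)) {x₀ y₀ : X} (hx₀ : x₀ ∈ μ.support)
    (hy₀ : y₀ ∈ μ.support) {ε δ : ℝ} (hε : 0 < ε) (hδ : 0 < δ) {c : ℂ} {η : ℝ}
    (hRc : ∀ x ∈ ball x₀ ε, ∀ y ∈ ball y₀ δ, ‖R x y - c‖ ≤ η) :
    ‖⟪ballAveragingLp μ x₀ ε, P (ballAveragingLp μ y₀ δ)⟫_ℂ - c‖ ≤ η :=
  hPR.norm_inner_averagingLp_sub_le _ _ _ _
    ((Measure.mem_support_iff_forall x₀).1 hx₀ _ (ball_mem_nhds x₀ hε)).ne'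
    ((Measure.mem_support_iff_forall y₀).1 hy₀ _ (ball_mem_nhds y₀ hδ)).ne'
    (fun x => (hR.uncurry_left x).aestronglyMeasurable) hRc

theorem HasIntegralKernel.exists_pos_norm_apply_ballAveragingLp_sq_le (hP : IsStarProjection P)
    (hPR : HasIntegralKernel P R) (hR : Continuous (Function.uncurry R)) {x₀ : X}
    (hx₀ : x₀ ∈ μ.support) (hdiag : (R x₀ x₀).re = 0) {θ : ℝ} (hθ : 0 < θ) :
    ∃ r > 0, ∀ ε, 0 < ε → ε ≤ r → ‖P (ballAveragingLp μ x₀ ε)‖ ^ 2 ≤ θ := by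
  obtain ⟨r, hr, hRr⟩ := exists_pos_forall_mem_ball_dist_le hR x₀ x₀ hθ
  refine ⟨r, hr, fun ε hε hεr => ?_⟩
  set u := ballAveragingLp μ x₀ ε
  have hclose : ‖⟪u, P u⟫_ℂ - R x₀ x₀‖ ≤ θ :=
    hPR.norm_inner_ballAveragingLp_sub_le hR hx₀ hx₀ hε hε fun x hx y hy => by
      simpa [dist_eq_norm] using hRr x (ball_subset_ball hεr hx) y (ball_subset_ball hεr hy)
  calc ‖P u‖ ^ 2 = RCLike.re ⟪u, P u⟫_ℂ := by
        rw [hP.inner_apply_right, inner_self_eq_norm_sq]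
    _ = RCLike.re (⟪u, P u⟫_ℂ - R x₀ x₀) := by simp [hdiag]
    _ ≤ θ := (RCLike.re_le_norm _).trans hclose

/-- For averages `u`, `v` of `δ_{x₀}`, `δ_{y₀}`: `‖P u‖² ≈ Re R(x₀, x₀) = 0`, while
`R(x₀, y₀) ≈ ⟪u, P v⟫ = ⟪P u, P v⟫`. -/
theorem HasIntegralKernel.eq_zero_of_re_diag_eq_zero (hP : IsStarProjection P)
    (hPR : HasIntegralKernel P R) (hR : Continuous (Function.uncurry R)) {x₀ y₀ : X}
    (hx₀ : x₀ ∈ μ.support) (hy₀ : y₀ ∈ μ.support) (hdiag : (R x₀ x₀).re = 0) :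
    R x₀ y₀ = 0 := by
  refine norm_le_zero_iff.1 (le_of_forall_pos_le_add fun η hη => ?_)
  obtain ⟨δ, hδ, hRδ⟩ := exists_pos_forall_mem_ball_dist_le hR x₀ y₀ (half_pos hη)
  set v := ballAveragingLp μ y₀ δ
  set θ := η / (2 * (‖P v‖ + 1))
  have hθ : 0 < θ := by positivity
  obtain ⟨r, hr, hPr⟩ :=
    hPR.exists_pos_norm_apply_ballAveragingLp_sq_le hP hR hx₀ hdiag (pow_pos hθ 2)
  set u := ballAveragingLp μ x₀ (min r δ)
  have hmin : 0 < min r δ := lt_min hr hδ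
  have hclose : ‖⟪u, P v⟫_ℂ - R x₀ y₀‖ ≤ η / 2 :=
    hPR.norm_inner_ballAveragingLp_sub_le hR hx₀ hy₀ hmin hδ fun x hx y hy => by
      simpa [dist_eq_norm] using hRδ x (ball_subset_ball (min_le_right r δ) hx) y hy
  have hPu : ‖P u‖ ≤ θ :=
    (pow_le_pow_iff_left₀ (norm_nonneg _) hθ.le two_ne_zero).1 (hPr _ hmin (min_le_left r δ))
  have hsmall : ‖⟪u, P v⟫_ℂ‖ ≤ η / 2 :=
    calc ‖⟪u, P v⟫_ℂ‖ = ‖⟪P u, P v⟫_ℂ‖ := by rw [hP.inner_apply_right]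
      _ ≤ θ * (‖P v‖ + 1) := (norm_inner_le_norm _ _).trans
          (mul_le_mul hPu (le_add_of_nonneg_right zero_le_one) (norm_nonneg _) hθ.le)
      _ = η / 2 := by simp only [θ]; field_simp
  calc ‖R x₀ y₀‖ ≤ ‖⟪u, P v⟫_ℂ‖ + ‖R x₀ y₀ - ⟪u, P v⟫_ℂ‖ := norm_le_norm_add_norm_sub' _ _
    _ ≤ 0 + η := by rw [norm_sub_rev]; linarith

theorem HasIntegralKernel.ae_integrable_norm_sq (hP : IsStarProjection P)
    (hPR : HasIntegralKernel P R) (hR : Continuous (Function.uncurry R))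
    (hrepro : ∀ᵐ x ∂μ, ∫ y, ‖R x y‖ ^ 2 ∂μ = (R x x).re) :
    ∀ᵐ x ∂μ, Integrable (fun y => ‖R x y‖ ^ 2) μ := by
  filter_upwards [hrepro, Measure.support_mem_ae] with x hrep hx
  by_contra hint
  have hdiag : (R x x).re = 0 := by rw [← hrep, integral_undef hint]
  refine hint ((integrable_zero X ℝ μ).congr ?_)
  filter_upwards [Measure.support_mem_ae] with y hy
  simp [hPR.eq_zero_of_re_diag_eq_zero hP hR hx hy hdiag]

theorem HasIntegralKernel.ae_sum_norm_mul_norm_le (hP : IsStarProjection P)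
    (hPR : HasIntegralKernel P R) (hR : Continuous (Function.uncurry R))
    (hrepro : ∀ᵐ x ∂μ, ∫ y, ‖R x y‖ ^ 2 ∂μ = (R x x).re) {ι : Type*} {e f : ι → Lp ℂ 2 μ}
    (he : Orthonormal ℂ e) (hf : Orthonormal ℂ f) (s : Finset ι) :
    ∀ᵐ x ∂μ, ∑ j ∈ s, ‖P (e j) x‖ * ‖P (f j) x‖ ≤ (R x x).re := by
  have hPe : ∀ᵐ x ∂μ, ∀ j ∈ s, P (e j) x = ∫ y, R x y * e j y ∂μ :=
    (Filter.eventually_all_finset s).2 fun j _ => hPR (e j)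
  have hPf : ∀ᵐ x ∂μ, ∀ j ∈ s, P (f j) x = ∫ y, R x y * f j y ∂μ :=
    (Filter.eventually_all_finset s).2 fun j _ => hPR (f j)
  filter_upwards [hPR.ae_integrable_norm_sq hP hR hrepro, hrepro, hPe, hPf]
    with x hint hrep hPe hPf
  obtain ⟨k, hk, hku⟩ :=
    exists_Lp_inner_eq_integral_mul (hR.uncurry_left x).aestronglyMeasurable hint
  rw [← hrep, ← hk]
  calc ∑ j ∈ s, ‖P (e j) x‖ * ‖P (f j) x‖ = ∑ j ∈ s, ‖⟪e j, k⟫_ℂ‖ * ‖⟪f j, k⟫_ℂ‖ :=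
        Finset.sum_congr rfl fun j hj => by
          rw [hPe j hj, hPf j hj, ← hku, ← hku, norm_inner_symm k, norm_inner_symm k]
    _ ≤ ‖k‖ ^ 2 := he.sum_norm_inner_mul_norm_inner_le hf s k

theorem HasIntegralKernel.sum_norm_inner_compression_le (hP : IsStarProjection P)
    (hPR : HasIntegralKernel P R) (hR : Continuous (Function.uncurry R))
    (hrepro : ∀ᵐ x ∂μ, ∫ y, ‖R x y‖ ^ 2 ∂μ = (R x x).re) {V : X → ℂ}
    (hV : Integrable (fun x => ‖V x‖ * (R x x).re) μ) {Mv : Lp ℂ 2 μ →L[ℂ] Lp ℂ 2 μ}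
    (hMv : ∀ u : Lp ℂ 2 μ, (Mv u : X → ℂ) =ᵐ[μ] fun x => V x * u x) {ι : Type*}
    {e f : ι → Lp ℂ 2 μ} (he : Orthonormal ℂ e) (hf : Orthonormal ℂ f) (s : Finset ι) :
    ∑ j ∈ s, ‖⟪(P ∘L Mv ∘L P) (e j), f j⟫_ℂ‖ ≤ ∫ x, ‖V x‖ * (R x x).re ∂μ := by
  have hint := integrable_norm_mul_norm_mul_norm_of_mul_operator hMv
  calc ∑ j ∈ s, ‖⟪(P ∘L Mv ∘L P) (e j), f j⟫_ℂ‖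
      ≤ ∑ j ∈ s, ∫ x, ‖V x‖ * (‖P (e j) x‖ * ‖P (f j) x‖) ∂μ :=
        Finset.sum_le_sum fun j _ =>
          (congrArg norm (hP.isSelfAdjoint.isSymmetric (Mv (P (e j))) (f j))).trans_le
            (norm_inner_le_integral_of_mul_operator hMv _ _)
    _ = ∫ x, ∑ j ∈ s, ‖V x‖ * (‖P (e j) x‖ * ‖P (f j) x‖) ∂μ :=
        (integral_finsetSum s fun j _ => hint _ _).symm
    _ ≤ ∫ x, ‖V x‖ * (R x x).re ∂μ := by
        refine integral_mono_ae (integrable_finsetSum s fun j _ => hint _ _) hV ?_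
        filter_upwards [hPR.ae_sum_norm_mul_norm_le hP hR hrepro he hf s] with x hx
        rw [← Finset.mul_sum]
        exact mul_le_mul_of_nonneg_left hx (norm_nonneg _)

end Metric

theorem stmt18_general (d : ℕ) (Ω : Set (EuclideanSpace ℝ (Fin d)))
    (R : EuclideanSpace ℝ (Fin d) → EuclideanSpace ℝ (Fin d) → ℂ)
    (hRcont : Continuous fun p : EuclideanSpace ℝ (Fin d) × EuclideanSpace ℝ (Fin d) =>
      R p.1 p.2)
    (P Mv : Lp ℂ 2 (volume.restrict Ω) →L[ℂ] Lp ℂ 2 (volume.restrict Ω))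
    (hPsa : IsSelfAdjoint P) (hPidem : P ∘L P = P)
    (hPker : ∀ u : Lp ℂ 2 (volume.restrict Ω),
      (P u : EuclideanSpace ℝ (Fin d) → ℂ) =ᵐ[volume.restrict Ω]
        fun x => ∫ y, R x y * u y ∂(volume.restrict Ω))
    (hrepro : ∀ᵐ x ∂(volume.restrict Ω),
      ∫ y, ‖R x y‖ ^ 2 ∂(volume.restrict Ω) = (R x x).re)
    (V : EuclideanSpace ℝ (Fin d) → ℂ)
    (hint : Integrable (fun x => ‖V x‖ * (R x x).re) (volume.restrict Ω))
    (hMv : ∀ u : Lp ℂ 2 (volume.restrict Ω),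
      (Mv u : EuclideanSpace ℝ (Fin d) → ℂ) =ᵐ[volume.restrict Ω] fun x => V x * u x) :
    ∀ (e f : ℕ → Lp ℂ 2 (volume.restrict Ω)),
      Orthonormal ℂ e → Orthonormal ℂ f → ∀ N : ℕ,
      ∑ j ∈ Finset.range N, ‖(⟪(P ∘L Mv ∘L P) (e j), f j⟫_ℂ)‖ ≤
        ∫ x, ‖V x‖ * (R x x).re ∂(volume.restrict Ω) :=
  fun _ _ he hf N => HasIntegralKernel.sum_norm_inner_compression_le ⟨hPidem, hPsa⟩ hPker hRcont
    hrepro hint hMv he hf (Finset.range N)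

/-- trace-norm bound: let `P` be an orthogonal projection on
`L²(Ω)` with hermitian integral kernel `R` satisfying the reproducing property
`∫ |R(x,y)|² dy = R(x,x) = ρ(x)`, and let `V` satisfy `∫ |V| ρ < ∞`. Then
`PVP` is trace class with `‖PVP‖_{S₁} ≤ ∫ |V| ρ`. The trace norm is expressed
through its variational characterization: for all orthonormal systems `(e_j)`,
`(f_j)`, `∑_j |⟨PVP e_j, f_j⟩| ≤ ∫ |V| ρ`. -/
theorem stmt18 (d : ℕ) (Ω : Set (EuclideanSpace ℝ (Fin d)))
    (R : EuclideanSpace ℝ (Fin d) → EuclideanSpace ℝ (Fin d) → ℂ)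
    (hRcont : Continuous fun p : EuclideanSpace ℝ (Fin d) × EuclideanSpace ℝ (Fin d) =>
      R p.1 p.2)
    (hherm : ∀ x y, R x y = (starRingEnd ℂ) (R y x))
    (P Mv : Lp ℂ 2 (volume.restrict Ω) →L[ℂ] Lp ℂ 2 (volume.restrict Ω))
    (hPsa : IsSelfAdjoint P) (hPidem : P ∘L P = P)
    (hPker : ∀ u : Lp ℂ 2 (volume.restrict Ω),
      (P u : EuclideanSpace ℝ (Fin d) → ℂ) =ᵐ[volume.restrict Ω]
        fun x => ∫ y, R x y * u y ∂(volume.restrict Ω))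
    (hrepro : ∀ᵐ x ∂(volume.restrict Ω),
      ∫ y, ‖R x y‖ ^ 2 ∂(volume.restrict Ω) = (R x x).re)
    (V : EuclideanSpace ℝ (Fin d) → ℂ) (hVmeas : Measurable V)
    (hint : Integrable (fun x => ‖V x‖ * (R x x).re) (volume.restrict Ω))
    (hMv : ∀ u : Lp ℂ 2 (volume.restrict Ω),
      (Mv u : EuclideanSpace ℝ (Fin d) → ℂ) =ᵐ[volume.restrict Ω] fun x => V x * u x) :
    ∀ (e f : ℕ → Lp ℂ 2 (volume.restrict Ω)),
      Orthonormal ℂ e → Orthonormal ℂ f → ∀ N : ℕ,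
      ∑ j ∈ Finset.range N, ‖(⟪(P ∘L Mv ∘L P) (e j), f j⟫_ℂ)‖ ≤
        ∫ x, ‖V x‖ * (R x x).re ∂(volume.restrict Ω) :=
  stmt18_general d Ω R hRcont P Mv hPsa hPidem hPker hrepro V hint hMv
end
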